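/- For 0 < |α| ≤ 1 and any positive integer n, |α|^{S(n)} ≤ n^{(3/log 3)·log|α|}. -/

import Mathlib

/-! Since `S` is additive over products, `n ^ 3 ≤ 3 ^ S n` reduces to the prime case `p ^ 3 ≤ 3 ^ p`,
which holds for every natural number. Taking logarithms, `(3 / log 3) * log n ≤ S n`, and raising
`‖α‖ ≤ 1` to these two exponents reverses the inequality. -/

def S (n : ℕ) : ℕ := n.factorization.sum fun p k => k * p

lemma S_mul {a b : ℕ} (ha : a ≠ 0) (hb : b ≠ 0) : S (a * b) = S a + S b := by
  unfold S
  rw [Nat.factorization_mul ha hb]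
  exact Finsupp.sum_add_index (by simp) (by intros; ring)

lemma S_prime {p : ℕ} (hp : p.Prime) : S p = p := by
  simp [S, hp.factorization]

lemma pow_three_le_three_pow (p : ℕ) : p ^ 3 ≤ 3 ^ p := by
  obtain hp | hp := lt_or_ge p 3
  · interval_cases p <;> norm_num
  induction p, hp using Nat.le_induction with
  | base => norm_num
  | succ p hp ih =>
    calc (p + 1) ^ 3 ≤ 3 * p ^ 3 := by nlinarith [Nat.mul_le_mul hp hp]
      _ ≤ 3 ^ (p + 1) := by rw [pow_succ' 3 p]; exact Nat.mul_le_mul_left 3 ih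

lemma pow_three_le_three_pow_S (n : ℕ) : n ^ 3 ≤ 3 ^ S n := by
  induction n using Nat.recOnMul with
  | zero => simp
  | one => simp [S]
  | prime p hp => rw [S_prime hp]; exact pow_three_le_three_pow p
  | mul a b ha hb =>
    rcases eq_or_ne a 0 with rfl | ha0
    · simp
    rcases eq_or_ne b 0 with rfl | hb0
    · simp
    rw [S_mul ha0 hb0, mul_pow, pow_add]
    exact Nat.mul_le_mul ha hb

lemma div_log_three_mul_log_le_S (n : ℕ) : 3 / Real.log 3 * Real.log n ≤ S n := by
  have hlog3 : 0 < Real.log 3 := Real.log_pos (by norm_num)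
  have hcast : ((n ^ 3 : ℕ) : ℝ) ≤ ((3 ^ S n : ℕ) : ℝ) := by exact_mod_cast pow_three_le_three_pow_S n
  rcases eq_or_ne n 0 with rfl | hn
  · simp
  have hlog := Real.log_le_log (by positivity) hcast
  push_cast at hlog
  rw [Real.log_pow, Real.log_pow] at hlog
  rw [div_mul_eq_mul_div, div_le_iff₀ hlog3]
  exact hlog

lemma Real.rpow_mul_log_comm {x y : ℝ} (hx : 0 < x) (hy : 0 < y) (c : ℝ) :
    x ^ (c * Real.log y) = y ^ (c * Real.log x) := by
  rw [Real.rpow_def_of_pos hx, Real.rpow_def_of_pos hy]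
  ring_nf

theorem alpha_pow_S_le (α : ℂ) (hα0 : 0 < ‖α‖) (hα1 : ‖α‖ ≤ 1) (n : ℕ) (hn : 0 < n) :
    ‖α‖ ^ S n ≤ (n : ℝ) ^ ((3 / Real.log 3) * Real.log ‖α‖) := by
  calc ‖α‖ ^ S n = ‖α‖ ^ (S n : ℝ) := (Real.rpow_natCast _ _).symm
    _ ≤ ‖α‖ ^ (3 / Real.log 3 * Real.log n) :=
      Real.rpow_le_rpow_of_exponent_ge hα0 hα1 (div_log_three_mul_log_le_S n)
    _ = (n : ℝ) ^ ((3 / Real.log 3) * Real.log ‖α‖) :=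
      Real.rpow_mul_log_comm hα0 (Nat.cast_pos.mpr hn) _
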